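/- arXiv:2509.02408 — 4 statements merged into one kernel-verified Lean document; each statement's English description precedes it below -/
import Mathlib

section
/- Let n ≥ 2, ℓ ≥ 2, and let the cache size satisfy n + ℓ − 1 ≤ k < nℓ. Fix a layer z and consider the layered request sequence σ whose i-th round requests page p_1^{(j)} for every layer j ≠ z and page p_{(i mod n)+1}^{(z)} for layer z. Then (i) any paging algorithm that at all times holds fewer than n pages of layer z in its cache incurs at least one cache miss every n rounds of σ, and (ii) since σ uses only n + ℓ − 1 ≤ k distinct pages, the optimal offline cost on any prefix of σ is at most n + ℓ − 1. -/
open MeasureTheory ProbabilityTheory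
open scoped ENNReal

/-- A valid evolution of cache states for a paging algorithm with cache size `k`
serving the request sequence `σ`: `caches i` is the cache content just before
serving request number `i` (the cache is initially empty, a page may only enter
the cache when it is requested, the requested page must be in the cache
afterwards, and the cache never holds more than `k` pages). -/
def IsExec {P : Type*} [DecidableEq P] (k : ℕ) (σ : ℕ → P) (caches : ℕ → Finset P) : Prop :=
  caches 0 = ∅ ∧
    ∀ i, σ i ∈ caches (i + 1) ∧ caches (i + 1) ⊆ insert (σ i) (caches i) ∧
      (caches (i + 1)).card ≤ k

/-- The number of cache misses incurred on the first `m` requests of `σ` by an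
algorithm whose cache states are `caches`. -/
def missCount {P : Type*} [DecidableEq P] (σ : ℕ → P) (caches : ℕ → Finset P)
    (m : ℕ) : ℕ :=
  ((Finset.range m).filter fun i => σ i ∉ caches i).card

/-- The optimal (offline) number of cache misses on the first `m` requests of
`σ`, with cache size `k`. -/
noncomputable def OPT {P : Type*} [DecidableEq P] (k : ℕ) (σ : ℕ → P) (m : ℕ) : ℕ :=
  sInf {c | ∃ caches : ℕ → Finset P, IsExec k σ caches ∧ missCount σ caches m = c}

/-- A deterministic online paging algorithm with cache size `k`: it chooses its
cache content as a function of the history of requests served so far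
(the cache is initially empty, a page may only enter the cache when it is
requested, the requested page must be in the cache afterwards, and the cache
never holds more than `k` pages). -/
structure OnlineAlgo (P : Type*) [DecidableEq P] (k : ℕ) where
  cache : List P → Finset P
  cache_nil : cache [] = ∅
  mem_cache : ∀ h p, p ∈ cache (h ++ [p])
  cache_subset : ∀ h p, cache (h ++ [p]) ⊆ insert p (cache h)
  card_cache_le : ∀ h, (cache h).card ≤ k

/-- The cache of online algorithm `A` just before serving request `i` of `σ`. -/
def OnlineAlgo.caches {P : Type*} [DecidableEq P] {k : ℕ} (A : OnlineAlgo P k) (σ : ℕ → P)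
    (i : ℕ) : Finset P :=
  A.cache ((List.range i).map σ)

/-- The cost (number of cache misses) of online algorithm `A` on the first `m`
requests of `σ`. -/
def OnlineAlgo.cost {P : Type*} [DecidableEq P] {k : ℕ} (A : OnlineAlgo P k)
    (σ : ℕ → P) (m : ℕ) : ℕ :=
  missCount σ (A.caches σ) m

/-- In the `ℓ`-layered paging problem with `n` experts per layer, pages are
pairs (layer, expert index) with layer in `[0, ℓ)` and expert index in `[0, n)`;
a request sequence is layered if its `i`-th request is a page of layer `i % ℓ`.
A round is a block of `ℓ` consecutive requests starting at a multiple of `ℓ`. -/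
def IsLayered (n ℓ : ℕ) (σ : ℕ → ℕ × ℕ) : Prop :=
  ∀ i, (σ i).1 = i % ℓ ∧ (σ i).2 < n

/-- The layered request sequence whose `i`-th round requests page `p_1`
(index `0`) of every layer `j ≠ z`, and page `p_{(i mod n)+1}` (index `i % n`)
of layer `z`. -/
def reqSeq (n ℓ z : ℕ) : ℕ → ℕ × ℕ :=
  fun t => (t % ℓ, if t % ℓ = z then (t / ℓ) % n else 0)

/-- Let `n ≥ 2`, `ℓ ≥ 2` and `n + ℓ - 1 ≤ k < n * ℓ`, and let
`σ = reqSeq n ℓ z`. (i) Any paging algorithm that at all times holds fewer than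
`n` pages of layer `z` in its cache incurs at least one cache miss every `n`
rounds (i.e. every `n * ℓ` requests) of `σ`; (ii) since `σ` only uses
`n + ℓ - 1 ≤ k` distinct pages, the optimal offline cost on any prefix of `σ`
is at most `n + ℓ - 1`. -/
theorem fixed_partition_adversarial_sequence
    {n ℓ k : ℕ} (hn : 2 ≤ n) (hℓ : 2 ≤ ℓ)
    (hk₁ : n + ℓ - 1 ≤ k) (hk₂ : k < n * ℓ) (z : ℕ) (hz : z < ℓ) :
    (∀ caches : ℕ → Finset (ℕ × ℕ), IsExec k (reqSeq n ℓ z) caches →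
        (∀ t, ((caches t).filter fun p => p.1 = z).card < n) →
        ∀ r : ℕ, ∃ t, r * (n * ℓ) ≤ t ∧ t < (r + 1) * (n * ℓ) ∧
          reqSeq n ℓ z t ∉ caches t) ∧
      ∀ m : ℕ, OPT k (reqSeq n ℓ z) m ≤ n + ℓ - 1 := by
  have hℓ0 : 0 < ℓ := by omega
  constructor
  · intro caches hexec hlt r
    by_contra hcon
    push_neg at hcon
    set t0 := r * (n * ℓ) with ht0
    have mono : ∀ d, t0 + d ≤ (r + 1) * (n * ℓ) → caches (t0 + d) ⊆ caches t0 := by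
      intro d
      induction d with
      | zero => intro _; exact subset_rfl
      | succ d ih =>
        intro hd
        have hd' : t0 + d < (r + 1) * (n * ℓ) := by omega
        have h1 := (hexec.2 (t0 + d)).2.1
        have h2 := hcon (t0 + d) (by omega) hd'
        have : caches (t0 + d + 1) ⊆ caches (t0 + d) := by
          intro x hx
          have := h1 hx
          rcases Finset.mem_insert.1 this with h | h
          · exact h ▸ h2
          · exact h
        exact this.trans (ih (by omega))
    have key : ∀ j, j < n → (z, j) ∈ caches t0 := by
      intro j hj
      set t := (r * n + j) * ℓ + z with htdef
      have hmod : t % ℓ = z := by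
        rw [htdef, Nat.mul_comm (r * n + j) ℓ, Nat.mul_add_mod, Nat.mod_eq_of_lt hz]
      have hdiv : t / ℓ = r * n + j := by
        rw [htdef, Nat.mul_comm (r * n + j) ℓ, Nat.mul_add_div hℓ0, Nat.div_eq_of_lt hz, Nat.add_zero]
      have hreq : reqSeq n ℓ z t = (z, j) := by
        have hmn : (r * n + j) % n = j := by
          rw [Nat.mul_comm r n, Nat.mul_add_mod, Nat.mod_eq_of_lt hj]
        simp [reqSeq, hmod, hdiv, hmn]
      have hlo : t0 ≤ t := by
        have : r * (n * ℓ) = r * n * ℓ := by ring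
        rw [ht0, this, htdef]
        have : r * n * ℓ ≤ (r * n + j) * ℓ := Nat.mul_le_mul_right ℓ (by omega)
        omega
      have hhi : t < (r + 1) * (n * ℓ) := by
        have h1 : t < (r * n + j + 1) * ℓ := by
          rw [htdef]; have := hz; nlinarith
        have h2 : (r * n + j + 1) * ℓ ≤ (r + 1) * (n * ℓ) := by
          have : r * n + j + 1 ≤ (r + 1) * n := by nlinarith
          calc (r * n + j + 1) * ℓ ≤ (r + 1) * n * ℓ := Nat.mul_le_mul_right ℓ this
            _ = (r + 1) * (n * ℓ) := by ring
        omega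
      have hin := hcon t hlo hhi
      rw [hreq] at hin
      have := mono (t - t0) (by omega)
      rw [Nat.add_sub_cancel' hlo] at this
      exact this hin
    have hsub : (Finset.range n).image (fun j => ((z, j) : ℕ × ℕ)) ⊆
        (caches t0).filter fun p => p.1 = z := by
      intro x hx
      rcases Finset.mem_image.1 hx with ⟨j, hj, rfl⟩
      exact Finset.mem_filter.2 ⟨key j (Finset.mem_range.1 hj), rfl⟩
    have hcard : n ≤ ((caches t0).filter fun p => p.1 = z).card := by
      have h1 : ((Finset.range n).image (fun j => ((z, j) : ℕ × ℕ))).card = n := by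
        rw [Finset.card_image_of_injective _ (fun a b h => by simpa using h),
          Finset.card_range]
      calc n = _ := h1.symm
        _ ≤ _ := Finset.card_le_card hsub
    exact absurd (hlt t0) (by omega)
  · intro m
    set σ := reqSeq n ℓ z with hσ
    set C : ℕ → Finset (ℕ × ℕ) := fun i => (Finset.range i).image σ with hC
    set S : Finset (ℕ × ℕ) := ((Finset.range ℓ).erase z).image (fun j => (j, 0)) ∪
      (Finset.range n).image (fun i => (z, i)) with hS
    have hσS : ∀ t, σ t ∈ S := by
      intro t
      by_cases h : t % ℓ = z
      · refine Finset.mem_union_right _ (Finset.mem_image.2 ⟨(t / ℓ) % n, ?_, ?_⟩)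
        · exact Finset.mem_range.2 (Nat.mod_lt _ (by omega))
        · simp [hσ, reqSeq, h]
      · refine Finset.mem_union_left _ (Finset.mem_image.2 ⟨t % ℓ, ?_, ?_⟩)
        · exact Finset.mem_erase.2 ⟨h, Finset.mem_range.2 (Nat.mod_lt _ hℓ0)⟩
        · simp [hσ, reqSeq, h]
    have hScard : S.card ≤ n + ℓ - 1 := by
      have h1 : (((Finset.range ℓ).erase z).image (fun j => ((j, 0) : ℕ × ℕ))).card ≤ ℓ - 1 := by
        calc _ ≤ ((Finset.range ℓ).erase z).card := Finset.card_image_le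
          _ = ℓ - 1 := by rw [Finset.card_erase_of_mem (Finset.mem_range.2 hz), Finset.card_range]
      have h2 : ((Finset.range n).image (fun i => ((z, i) : ℕ × ℕ))).card ≤ n :=
        le_trans Finset.card_image_le (by rw [Finset.card_range])
      calc S.card ≤ _ + _ := Finset.card_union_le _ _
        _ ≤ (ℓ - 1) + n := Nat.add_le_add h1 h2
        _ = n + ℓ - 1 := by omega
    have hexec : IsExec k σ C := by
      refine ⟨by simp [hC], fun i => ⟨?_, ?_, ?_⟩⟩
      · exact Finset.mem_image.2 ⟨i, Finset.mem_range.2 (Nat.lt_succ_self i), rfl⟩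
      · rw [hC]
        simp only [Finset.range_add_one, Finset.image_insert]
        exact subset_rfl
      · calc (C (i + 1)).card ≤ S.card := Finset.card_le_card (fun x hx => by
              rcases Finset.mem_image.1 hx with ⟨t, _, rfl⟩; exact hσS t)
          _ ≤ n + ℓ - 1 := hScard
          _ ≤ k := hk₁
    have hmiss : missCount σ C m ≤ n + ℓ - 1 := by
      have hinj : Set.InjOn σ ((Finset.range m).filter fun i => σ i ∉ C i) := by
        intro a ha b hb hab
        simp only [Finset.coe_filter, Set.mem_setOf_eq] at ha hb
        by_contra hne
        rcases Nat.lt_or_ge a b with h | h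
        · exact hb.2 (Finset.mem_image.2 ⟨a, Finset.mem_range.2 h, hab⟩)
        · have h' : b < a := by omega
          exact ha.2 (Finset.mem_image.2 ⟨b, Finset.mem_range.2 h', hab.symm⟩)
      calc missCount σ C m ≤ S.card := by
            refine Finset.card_le_card_of_injOn σ (fun i _ => hσS i) hinj
        _ ≤ n + ℓ - 1 := hScard
    calc OPT k σ m ≤ missCount σ C m := Nat.sInf_le ⟨C, hexec, rfl⟩
      _ ≤ n + ℓ - 1 := hmiss
end

section
/- For any ℓ ≥ 1 and cache size k such that ℓ divides k + 1, the LRU algorithm for the ℓ-layered paging problem has competitive ratio at least k. -/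
open MeasureTheory ProbabilityTheory
open scoped ENNReal

/-- The cache of the LRU (least recently used) algorithm just before serving
request `i` of `σ`: it consists of the (at most `k`) most recently requested
distinct pages, which is exactly the cache content obtained by evicting, on
each miss with a full cache, the page whose most recent request is earliest. -/
def lruCaches {P : Type*} [DecidableEq P] (k : ℕ) (σ : ℕ → P) (i : ℕ) : Finset P :=
  ((((List.range i).map σ).dedup).reverse.take k).toFinset

/-- The number of cache misses of LRU on the first `m` requests of `σ`. -/
def lruCost {P : Type*} [DecidableEq P] (k : ℕ) (σ : ℕ → P) (m : ℕ) : ℕ :=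
  missCount σ (lruCaches k σ) m


/-!
Cycle through `k + 1` distinct pages; since `ℓ ∣ k + 1` the `k + 1` residues can be laid out
so that the cycle is a layered sequence. LRU then always evicts exactly the page requested next
and misses every request. Offline, evicting on each miss the page requested at the next multiple
of `k` (Belady's rule on this sequence) misses only on the first `k + 1` requests and at multiples
of `k`. So on `k * M` requests `k * M ≤ r * (M + k + 1) + c` for all `M`, forcing `r ≥ k`.
-/

open Finset

def IsCyclicSeq {P : Type*} (p : ℕ) (σ : ℕ → P) : Prop :=
  ∀ a b, σ a = σ b ↔ a ≡ b [MOD p]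

def nextMultiple (k i : ℕ) : ℕ := k * (i / k + 1)

theorem lt_nextMultiple {k : ℕ} (hk : 0 < k) (i : ℕ) : i < nextMultiple k i :=
  Nat.lt_mul_div_succ i hk

theorem nextMultiple_le (k i : ℕ) : nextMultiple k i ≤ i + k := by
  have := Nat.mul_div_le i k
  rw [nextMultiple, mul_add, mul_one]
  omega

theorem dvd_nextMultiple (k i : ℕ) : k ∣ nextMultiple k i :=
  Dvd.intro _ rfl

theorem nextMultiple_succ (k i : ℕ) :
    nextMultiple k (i + 1) = nextMultiple k i ∨ nextMultiple k i = i + 1 := by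
  by_cases h : k ∣ i + 1
  · right
    rw [nextMultiple, ← Nat.mul_div_cancel' h, Nat.succ_div, if_pos h]
  · left
    rw [nextMultiple, nextMultiple, Nat.succ_div, if_neg h, add_zero]

namespace IsCyclicSeq

variable {P : Type*} {σ : ℕ → P} {p : ℕ}

theorem apply_ne (hσ : IsCyclicSeq p σ) {a b : ℕ} (hab : a < b) (hba : b < a + p) :
    σ a ≠ σ b := fun h => by
  have := ((hσ a b).1 h).add_le_of_lt hab
  omega

theorem injOn_Ico (hσ : IsCyclicSeq p σ) (a : ℕ) : Set.InjOn σ (Set.Ico a (a + p)) := by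
  intro x hx y hy hxy
  simp only [Set.mem_Ico] at hx hy
  by_contra hne
  rcases Nat.lt_or_gt_of_ne hne with h | h
  · exact hσ.apply_ne h (by omega) hxy
  · exact hσ.apply_ne h (by omega) hxy.symm

theorem apply_mem_image_range [DecidableEq P] (hσ : IsCyclicSeq p σ) (hp : 0 < p) (j : ℕ) :
    σ j ∈ (range p).image σ :=
  mem_image.2 ⟨j % p, mem_range.2 (Nat.mod_lt j hp), (hσ _ _).2 (Nat.mod_modEq j p)⟩

end IsCyclicSeq

section Paging

variable {P : Type*} [DecidableEq P]

theorem missCount_le (σ : ℕ → P) (caches : ℕ → Finset P) (m : ℕ) : missCount σ caches m ≤ m :=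
  (card_filter_le _ _).trans (card_range m).le

theorem missCount_eq_self {σ : ℕ → P} {caches : ℕ → Finset P} {m : ℕ}
    (h : ∀ i, σ i ∉ caches i) : missCount σ caches m = m := by
  rw [missCount, filter_true_of_mem fun i _ => h i, card_range]

theorem OPT_le_missCount {k : ℕ} {σ : ℕ → P} {caches : ℕ → Finset P} (h : IsExec k σ caches)
    (m : ℕ) : OPT k σ m ≤ missCount σ caches m :=
  Nat.sInf_le ⟨caches, h, rfl⟩

theorem OPT_le (k : ℕ) (σ : ℕ → P) (m : ℕ) : OPT k σ m ≤ m := by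
  rcases Set.eq_empty_or_nonempty
      {c | ∃ caches : ℕ → Finset P, IsExec k σ caches ∧ missCount σ caches m = c} with h | h
  · rw [OPT, h, Nat.sInf_empty]
    exact Nat.zero_le m
  · obtain ⟨caches, -, hc⟩ := Nat.sInf_mem h
    rw [OPT, ← hc]
    exact missCount_le σ caches m

theorem lruCaches_subset_image_range (k : ℕ) (σ : ℕ → P) (i : ℕ) :
    lruCaches k σ i ⊆ (range i).image σ := by
  intro q hq
  simp only [lruCaches, List.mem_toFinset] at hq
  obtain ⟨j, hj, rfl⟩ :=
    List.mem_map.1 (List.mem_dedup.1 (List.mem_reverse.1 (List.mem_of_mem_take hq)))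
  exact mem_image_of_mem σ (mem_range.2 (List.mem_range.1 hj))

theorem lruCaches_subset_image_Ico {k i : ℕ} {σ : ℕ → P}
    (hinj : Set.InjOn σ (Set.Ico (i - k) i)) : lruCaches k σ i ⊆ (Ico (i - k) i).image σ := by
  rcases lt_or_ge i k with hik | hki
  · rw [show i - k = 0 by omega, ← range_eq_Ico]
    exact lruCaches_subset_image_range k σ i
  obtain ⟨d, rfl⟩ : ∃ d, i = d + k := ⟨i - k, by omega⟩
  set T := (List.range' d k).map σ
  have hT : T.Nodup := by
    refine (List.nodup_range').map_on fun a ha b hb hab => hinj ?_ ?_ hab <;>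
      simp only [List.mem_range'_1, Set.mem_Ico] at * <;> omega
  obtain ⟨X, hX⟩ := List.suffix_union_right ((List.range d).map σ) T
  have hdedup : ((List.range (d + k)).map σ).dedup = X ++ T := by
    have hsplit : (List.range (d + k)).map σ = (List.range d).map σ ++ T := by
      simp [T, List.range_eq_range', ← List.range'_append]
    rw [hsplit, List.dedup_append, hT.dedup, hX]
  intro q hq
  simp only [lruCaches, hdedup, List.reverse_append,
    List.take_left' (by simp [T] : T.reverse.length = k), List.mem_toFinset, List.mem_reverse, T,
    List.mem_map, List.mem_range'_1] at hq
  obtain ⟨j, hj, rfl⟩ := hq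
  exact mem_image_of_mem σ (mem_Ico.2 (by omega))

def offlineCaches (k : ℕ) (σ : ℕ → P) : ℕ → Finset P
  | 0 => ∅
  | i + 1 => ((range (i + 1)).image σ).erase (σ (nextMultiple k i))

theorem offlineCaches_succ_subset (k : ℕ) (σ : ℕ → P) (i : ℕ) :
    offlineCaches k σ (i + 1) ⊆ insert (σ i) (offlineCaches k σ i) := by
  intro q hq
  obtain ⟨hqw, hq⟩ := mem_erase.1 hq
  obtain ⟨j, hj, rfl⟩ := mem_image.1 hq
  by_cases hji : σ j = σ i
  · exact hji ▸ mem_insert_self _ _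
  refine mem_insert_of_mem ?_
  have hji' : j < i :=
    lt_of_le_of_ne (Nat.lt_succ_iff.1 (mem_range.1 hj)) (by rintro rfl; exact hji rfl)
  obtain ⟨i, rfl⟩ : ∃ i', i = i' + 1 := ⟨i - 1, by omega⟩
  refine mem_erase.2 ⟨?_, mem_image_of_mem σ (mem_range.2 hji')⟩
  rcases nextMultiple_succ k i with h | h
  · rwa [← h]
  · rwa [h]

namespace IsCyclicSeq

variable {σ : ℕ → P} {k : ℕ}

theorem lruCost_eq {p : ℕ} (hσ : IsCyclicSeq p σ) (hkp : k < p) (m : ℕ) : lruCost k σ m = m := by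
  refine missCount_eq_self fun i hi => ?_
  have hinj : Set.InjOn σ (Set.Ico (i - k) i) :=
    (hσ.injOn_Ico (i - k)).mono (Set.Ico_subset_Ico_right (by omega))
  obtain ⟨j, hj, hji⟩ := mem_image.1 (lruCaches_subset_image_Ico hinj hi)
  rw [mem_Ico] at hj
  exact hσ.apply_ne hj.2 (by omega) hji

theorem card_offlineCaches_succ_le (hσ : IsCyclicSeq (k + 1) σ) (i : ℕ) :
    (offlineCaches k σ (i + 1)).card ≤ k := by
  have hsub : offlineCaches k σ (i + 1) ⊆ ((range (k + 1)).image σ).erase (σ (nextMultiple k i)) :=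
    erase_subset_erase _ fun q hq => by
      obtain ⟨j, -, rfl⟩ := mem_image.1 hq
      exact hσ.apply_mem_image_range k.succ_pos j
  calc (offlineCaches k σ (i + 1)).card
      ≤ (((range (k + 1)).image σ).erase (σ (nextMultiple k i))).card := card_le_card hsub
    _ = ((range (k + 1)).image σ).card - 1 :=
        card_erase_of_mem (hσ.apply_mem_image_range k.succ_pos _)
    _ ≤ k := by
        have := (card_image_le (s := range (k + 1)) (f := σ)).trans (card_range (k + 1)).le
        omega

theorem isExec_offlineCaches (hσ : IsCyclicSeq (k + 1) σ) (hk : 0 < k) :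
    IsExec k σ (offlineCaches k σ) := by
  refine ⟨rfl, fun i => ⟨?_, offlineCaches_succ_subset k σ i, hσ.card_offlineCaches_succ_le i⟩⟩
  have hne : σ i ≠ σ (nextMultiple k i) :=
    hσ.apply_ne (lt_nextMultiple hk i) (by linarith [nextMultiple_le k i])
  exact mem_erase.2 ⟨hne, mem_image_of_mem σ (self_mem_range_succ i)⟩

theorem apply_mem_offlineCaches (hσ : IsCyclicSeq (k + 1) σ) (hk : 0 < k) {i : ℕ}
    (hki : k < i) (hdvd : ¬ k ∣ i) : σ i ∈ offlineCaches k σ i := by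
  obtain ⟨i, rfl⟩ : ∃ i', i = i' + 1 := ⟨i - 1, by omega⟩
  have hw : nextMultiple k (i + 1) = nextMultiple k i :=
    (nextMultiple_succ k i).resolve_right fun h => hdvd (h ▸ dvd_nextMultiple k i)
  have hne : σ (i + 1) ≠ σ (nextMultiple k i) :=
    hw ▸ hσ.apply_ne (lt_nextMultiple hk _) (by linarith [nextMultiple_le k (i + 1)])
  refine mem_erase.2 ⟨hne, image_subset_image (range_subset_range.2 hki) ?_⟩
  exact hσ.apply_mem_image_range k.succ_pos _

theorem missCount_offlineCaches_le (hσ : IsCyclicSeq (k + 1) σ) (hk : 0 < k) (M : ℕ) :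
    missCount σ (offlineCaches k σ) (k * M) ≤ M + (k + 1) := by
  have hsub : (range (k * M)).filter (fun i => σ i ∉ offlineCaches k σ i) ⊆
      (range M).image (k * ·) ∪ range (k + 1) := by
    intro i hi
    obtain ⟨hiM, hmiss⟩ := mem_filter.1 hi
    rw [mem_union, mem_range]
    by_cases hik : i < k + 1
    · exact Or.inr hik
    obtain ⟨t, rfl⟩ : k ∣ i := by
      by_contra hdvd
      exact hmiss (hσ.apply_mem_offlineCaches hk (by omega) hdvd)
    exact Or.inl (mem_image_of_mem _ (mem_range.2 (lt_of_mul_lt_mul_left (mem_range.1 hiM) hk.le)))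
  calc missCount σ (offlineCaches k σ) (k * M)
      ≤ ((range M).image (k * ·) ∪ range (k + 1)).card := card_le_card hsub
    _ ≤ ((range M).image (k * ·)).card + (range (k + 1)).card := card_union_le _ _
    _ ≤ M + (k + 1) := by
        rw [card_range]
        exact Nat.add_le_add_right (card_image_le.trans (card_range M).le) _

theorem OPT_mul_le (hσ : IsCyclicSeq (k + 1) σ) (hk : 0 < k) (M : ℕ) :
    OPT k σ (k * M) ≤ M + (k + 1) :=
  (OPT_le_missCount (hσ.isExec_offlineCaches hk) _).trans (hσ.missCount_offlineCaches_le hk M)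

end IsCyclicSeq

end Paging

def layeredCycle (ℓ k i : ℕ) : ℕ × ℕ := (i % (k + 1) % ℓ, i % (k + 1) / ℓ)

theorem isCyclicSeq_layeredCycle (ℓ k : ℕ) : IsCyclicSeq (k + 1) (layeredCycle ℓ k) := by
  refine fun a b => ⟨fun h => ?_, fun h => by rw [layeredCycle, layeredCycle, h]⟩
  obtain ⟨hmod, hdiv⟩ := Prod.ext_iff.1 h
  rw [Nat.ModEq, ← Nat.div_add_mod (a % (k + 1)) ℓ, ← Nat.div_add_mod (b % (k + 1)) ℓ]
  exact congrArg₂ _ (congrArg _ hdiv) hmod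

theorem isLayered_layeredCycle {n ℓ k : ℕ} (hdvd : ℓ ∣ k + 1) (hpages : k + 1 ≤ n * ℓ) :
    IsLayered n ℓ (layeredCycle ℓ k) := fun i =>
  ⟨Nat.mod_mod_of_dvd i hdvd,
    Nat.div_lt_of_lt_mul (by rw [mul_comm]; exact (Nat.mod_lt i k.succ_pos).trans_le hpages)⟩

theorem le_of_forall_mul_le_mul_add {a r c C : ℝ} {o : ℕ → ℝ} (ha : 0 < a) (ho : ∀ M, 0 ≤ o M)
    (hoC : ∀ M : ℕ, o M ≤ M + C) (h : ∀ M : ℕ, a * M ≤ r * o M + c) : a ≤ r := by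
  by_contra! hra
  set r' := max r 0
  have hr' : r' < a := max_lt hra ha
  obtain ⟨M, hM⟩ := exists_nat_gt ((r' * C + c) / (a - r'))
  rw [div_lt_iff₀ (by linarith)] at hM
  have : a * M ≤ r' * (M + C) + c := calc
    a * M ≤ r * o M + c := h M
    _ ≤ r' * o M + c := by gcongr; exacts [ho M, le_max_left r 0]
    _ ≤ r' * (M + C) + c := by gcongr; exact hoC M
  linarith

theorem lru_lower_bound_general
    {n ℓ k : ℕ} (hdvd : ℓ ∣ k + 1) (hpages : k + 1 ≤ n * ℓ)
    (r c : ℝ)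
    (hcomp : ∀ σ : ℕ → ℕ × ℕ, IsLayered n ℓ σ → ∀ m : ℕ,
      (lruCost k σ m : ℝ) ≤ r * (OPT k σ m : ℝ) + c) :
    (k : ℝ) ≤ r := by
  have hσ := isCyclicSeq_layeredCycle ℓ k
  have hcyc := hcomp _ (isLayered_layeredCycle hdvd hpages)
  simp only [hσ.lruCost_eq k.lt_succ_self] at hcyc
  rcases Nat.eq_zero_or_pos k with rfl | hk
  · have h1 : (1 : ℝ) ≤ r := le_of_forall_mul_le_mul_add one_pos (fun _ => Nat.cast_nonneg _)
      (C := 0) (fun M => by simpa using OPT_le 0 (layeredCycle ℓ 0) M)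
      (fun M => by simpa using hcyc M)
    exact_mod_cast zero_le_one.trans h1
  · refine le_of_forall_mul_le_mul_add (C := k + 1) (Nat.cast_pos.2 hk)
      (fun _ => Nat.cast_nonneg _) (fun M => ?_) (fun M => by simpa using hcyc (k * M))
    exact_mod_cast hσ.OPT_mul_le hk M

/-- For any `ℓ ≥ 1` and cache size `k` such that `ℓ` divides
`k + 1`, the LRU algorithm for the `ℓ`-layered paging problem (with enough
pages, `n * ℓ ≥ k + 1`) has competitive ratio at least `k`: whenever LRU is
`r`-competitive with additive constant `c`, necessarily `r ≥ k`. -/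
theorem lru_lower_bound
    {n ℓ k : ℕ} (hℓ : 1 ≤ ℓ) (hdvd : ℓ ∣ k + 1) (hpages : k + 1 ≤ n * ℓ)
    (r c : ℝ)
    (hcomp : ∀ σ : ℕ → ℕ × ℕ, IsLayered n ℓ σ → ∀ m : ℕ,
      (lruCost k σ m : ℝ) ≤ r * (OPT k σ m : ℝ) + c) :
    (k : ℝ) ≤ r :=
  lru_lower_bound_general hdvd hpages r c hcomp
end

section
/- In the parallel coupon collector problem with N ≥ 2 coupon types and C ≥ 1 collectors, the cover time satisfies E[T(N, C)] ≥ max(N·H_N, log(C)/6), where H_N = Σ_{i=1}^N 1/i. -/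
open MeasureTheory ProbabilityTheory
open scoped ENNReal

/-- The cover time of the parallel coupon collector problem: the first round
`t` by which each of the `C` collectors has collected each of the `N` coupon
types (`ω s c` is the coupon type picked by collector `c` in round `s`). -/
noncomputable def coverTime {N C : ℕ} (ω : ℕ → Fin C → Fin N) : ℕ :=
  sInf {t | ∀ c : Fin C, ∀ x : Fin N, ∃ s < t, ω s c = x}

/-- `μ` is the law of the picks in the parallel coupon collector problem with
`N` coupon types and `C` collectors: the picks of different rounds are
independent, and in each round the joint pick of the `C` collectors is uniform
among all `N ^ C` possibilities (equivalently, each collector independently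
picks a coupon type uniformly at random). -/
def IsCouponMeasure {N C : ℕ} (μ : MeasureTheory.Measure (ℕ → Fin C → Fin N)) : Prop :=
  MeasureTheory.IsProbabilityMeasure μ ∧
    ProbabilityTheory.iIndepFun (fun t (ω : ℕ → Fin C → Fin N) => ω t) μ ∧
    ∀ t : ℕ, ∀ f : Fin C → Fin N, μ {ω | ω t = f} = ((N : ENNReal) ^ C)⁻¹

/-- The `n`-th harmonic number `H_n = ∑_{i=1}^n 1/i`, as a real number. -/
noncomputable def harmonicR (n : ℕ) : ℝ := ∑ i ∈ Finset.range n, (1 : ℝ) / (i + 1)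

/-!
Write `p t` for the probability that `t` uniform draws from `N` types show every type, i.e. the
number of surjections `Fin t → Fin N` divided by `N ^ t`. The collectors are independent, so
`P(T ≤ t) = p t ^ C` and `E[T] = ∑ₜ (1 - p t ^ C)`.

Since `p t ^ C ≤ p t`, the expectation is at least the single-collector one, `∑ₜ (1 - p t)`.
Inclusion–exclusion writes `1 - p t` as `∑ⱼ (-1)ʲ C(N, j+1) (1 - (j+1)/N)ᵗ`; summing the
geometric series gives `N ∑ⱼ (-1)ʲ C(N, j+1) / (j+1) = N H_N`.

For the second bound, a surjection hits a fixed type, so `p t ≤ 1 - (1 - 1/N)ᵗ`. For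
`t ≤ N log C / 2` we have `(1 - 1/N)ᵗ ≥ exp (-2t/N) ≥ 1/C`, hence
`p t ^ C ≤ (1 - 1/C) ^ C ≤ 1/e`: each of the first `⌊N log C / 2⌋` rounds contributes at least
`1/2`.
-/

open Finset Function

namespace CouponCollector

section Counting

variable {α β : Type*} [Fintype α] [DecidableEq α] [Fintype β] [DecidableEq β]

theorem card_surjective_eq_sum :
    (#{f : α → β | Surjective f} : ℤ) = ∑ k ∈ range (Fintype.card β + 1),
      (-1) ^ k * (Fintype.card β).choose k * ((Fintype.card β : ℤ) - k) ^ Fintype.card α := by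
  have hmiss (A : Finset β) : #(A.inf fun b => ({f : α → β | ∀ a, f a ≠ b} : Finset _)) =
      (Fintype.card β - #A) ^ Fintype.card α := by
    have : (A.inf fun b => ({f : α → β | ∀ a, f a ≠ b} : Finset _)) =
        Fintype.piFinset fun _ => Aᶜ := by
      ext f; simp only [mem_inf, mem_filter, mem_univ, true_and, Fintype.mem_piFinset, mem_compl]
      exact ⟨fun h a ha => h _ ha a rfl, fun h b hb a hab => h a (hab ▸ hb)⟩
    rw [this, Fintype.card_piFinset, prod_const, card_univ, card_compl]
  have hsurj : ({f : α → β | Surjective f} : Finset _) =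
      univ.inf fun b => ({f : α → β | ∀ a, f a ≠ b} : Finset _)ᶜ := by
    ext f
    rw [mem_filter_univ]
    simp [Surjective, mem_inf]
  rw [hsurj, inclusion_exclusion_card_inf_compl]
  simp only [hmiss, Nat.cast_pow]
  rw [sum_powerset_apply_card
    (fun k => (-1 : ℤ) ^ k * ((Fintype.card β - k : ℕ) : ℤ) ^ Fintype.card α), card_univ]
  refine sum_congr rfl fun k hk => ?_
  rw [Nat.cast_sub (Nat.lt_succ_iff.1 (mem_range.1 hk)), nsmul_eq_mul]
  ring

theorem card_surjective_add_pow_le [Nonempty β] :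
    #{f : α → β | Surjective f} + (Fintype.card β - 1) ^ Fintype.card α ≤
      Fintype.card β ^ Fintype.card α := by
  obtain ⟨b⟩ := ‹Nonempty β›
  have hmiss : #(Fintype.piFinset fun _ : α => ({b}ᶜ : Finset β)) =
      (Fintype.card β - 1) ^ Fintype.card α := by
    rw [Fintype.card_piFinset, prod_const, card_univ, card_compl, card_singleton]
  rw [← hmiss, ← card_union_of_disjoint, ← Fintype.card_fun]
  · exact card_le_univ _
  · refine disjoint_left.2 fun f hsurj hmiss_b => ?_
    obtain ⟨a, ha⟩ := (mem_filter.1 hsurj).2 b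
    exact (mem_compl.1 (Fintype.mem_piFinset.1 hmiss_b a)) (mem_singleton.2 ha)

theorem card_filter_forall_apply_swap {α γ β : Type*} [Fintype α] [DecidableEq α] [Fintype γ]
    [DecidableEq γ] [Fintype β] (P : (α → β) → Prop) [DecidablePred P] :
    #{g : α → γ → β | ∀ c, P fun a => g a c} = #{h : α → β | P h} ^ Fintype.card γ := by
  rw [← Fintype.card_subtype, ← Fintype.card_subtype, ← Fintype.card_fun]
  exact Fintype.card_congr
    { toFun g c := ⟨fun a => g.1 a c, g.2 c⟩
      invFun f := ⟨fun a c => (f c).1 a, fun c => (f c).2⟩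
      left_inv _ := rfl
      right_inv _ := rfl }

end Counting

section Harmonic

theorem sum_range_alternating_choose_div_succ (n : ℕ) :
    ∑ j ∈ range (n + 1), (-1 : ℝ) ^ j * n.choose j / (j + 1) = 1 / (n + 1) := by
  have hchoose (j : ℕ) : (n.choose j : ℝ) / (j + 1) = (n + 1).choose (j + 1) / (n + 1) := by
    rw [div_eq_div_iff (by positivity) (by positivity)]
    exact_mod_cast (mul_comm _ _).trans (Nat.add_one_mul_choose_eq n j)
  have halt : ∑ j ∈ range (n + 1), (-1 : ℝ) ^ j * (n + 1).choose (j + 1) = 1 := by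
    have h := Int.alternating_sum_range_choose_of_ne (Nat.succ_ne_zero n)
    rw [sum_range_succ'] at h
    have h' : ∑ j ∈ range (n + 1), (-1 : ℤ) ^ j * (n + 1).choose (j + 1) = 1 := by
      simp only [pow_succ, mul_neg_one, neg_mul, sum_neg_distrib, pow_zero, Nat.choose_zero_right,
        Nat.cast_one, mul_one] at h
      linarith
    exact_mod_cast h'
  calc ∑ j ∈ range (n + 1), (-1 : ℝ) ^ j * n.choose j / (j + 1)
      = (∑ j ∈ range (n + 1), (-1 : ℝ) ^ j * (n + 1).choose (j + 1)) / (n + 1) := by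
        rw [sum_div]
        exact sum_congr rfl fun j _ => by rw [mul_div_assoc, hchoose, mul_div_assoc]
    _ = 1 / (n + 1) := by rw [halt]

theorem sum_range_alternating_choose_succ_div_succ (n : ℕ) :
    ∑ j ∈ range n, (-1 : ℝ) ^ j * n.choose (j + 1) / (j + 1) = harmonicR n := by
  induction n with
  | zero => simp [harmonicR]
  | succ n ih =>
    have hpascal (j : ℕ) : (-1 : ℝ) ^ j * (n + 1).choose (j + 1) / (j + 1) =
        (-1 : ℝ) ^ j * n.choose (j + 1) / (j + 1) + (-1 : ℝ) ^ j * n.choose j / (j + 1) := by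
      rw [Nat.choose_succ_succ', Nat.cast_add]
      ring
    rw [sum_congr rfl fun j _ => hpascal j, sum_add_distrib, sum_range_succ,
      Nat.choose_succ_self, ih, sum_range_alternating_choose_div_succ, harmonicR, harmonicR,
      sum_range_succ]
    simp

theorem one_le_harmonicR {n : ℕ} (hn : n ≠ 0) : 1 ≤ harmonicR n := by
  have := single_le_sum (f := fun i : ℕ => (1 : ℝ) / (i + 1)) (fun i _ => by positivity)
    (mem_range.2 (Nat.pos_of_ne_zero hn))
  simpa [harmonicR] using this

end Harmonic

section CoverProb

noncomputable def coverProb (n t : ℕ) : ℝ :=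
  #{f : Fin t → Fin n | Surjective f} / (n : ℝ) ^ t

theorem coverProb_nonneg (n t : ℕ) : 0 ≤ coverProb n t := by
  unfold coverProb; positivity

theorem coverProb_le_one {n : ℕ} (hn : n ≠ 0) (t : ℕ) : coverProb n t ≤ 1 := by
  rw [coverProb, div_le_one (by positivity)]
  exact_mod_cast (card_le_univ _).trans_eq (by simp)

theorem coverProb_le_one_sub_pow {n : ℕ} (hn : n ≠ 0) (t : ℕ) :
    coverProb n t ≤ 1 - (1 - 1 / n : ℝ) ^ t := by
  have : Nonempty (Fin n) := Fin.pos_iff_nonempty.1 (Nat.pos_of_ne_zero hn)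
  have hcard := card_surjective_add_pow_le (α := Fin t) (β := Fin n)
  simp only [Fintype.card_fin] at hcard
  have hcard' :
      (#{f : Fin t → Fin n | Surjective f} : ℝ) + ((n : ℝ) - 1) ^ t ≤ (n : ℝ) ^ t := by
    have h := (Nat.cast_le (α := ℝ)).2 hcard
    push_cast [Nat.cast_sub (Nat.one_le_iff_ne_zero.2 hn)] at h
    exact h
  rw [coverProb, div_le_iff₀ (by positivity), sub_mul, one_sub_div (by positivity), div_pow,
    div_mul_cancel₀ _ (by positivity)]
  linarith

theorem one_sub_coverProb {n : ℕ} (hn : n ≠ 0) (t : ℕ) :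
    1 - coverProb n t =
      ∑ j ∈ range n, (-1 : ℝ) ^ j * n.choose (j + 1) * (1 - (j + 1) / n) ^ t := by
  have hcount : (#{f : Fin t → Fin n | Surjective f} : ℝ) =
      ∑ k ∈ range (n + 1), (-1) ^ k * n.choose k * ((n : ℝ) - k) ^ t := by
    have h := card_surjective_eq_sum (α := Fin t) (β := Fin n)
    simp only [Fintype.card_fin] at h
    exact_mod_cast h
  have hn' : (n : ℝ) ≠ 0 := by exact_mod_cast hn
  have hterm (k : ℕ) : (-1 : ℝ) ^ k * n.choose k * ((n : ℝ) - k) ^ t / (n : ℝ) ^ t =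
      (-1 : ℝ) ^ k * n.choose k * (1 - k / n) ^ t := by
    rw [one_sub_div hn', div_pow, mul_div_assoc]
  rw [coverProb, hcount, sum_div, sum_congr rfl fun k _ => hterm k, sum_range_succ']
  simp only [pow_succ, Nat.cast_add, Nat.cast_one, pow_zero, Nat.choose_zero_right, Nat.cast_zero,
    zero_div, sub_zero, one_pow, mul_one]
  rw [sub_add_cancel_right, ← sum_neg_distrib]
  exact sum_congr rfl fun j _ => by ring

theorem hasSum_one_sub_coverProb {n : ℕ} (hn : n ≠ 0) :
    HasSum (fun t => 1 - coverProb n t) (n * harmonicR n) := by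
  have hn' : (0 : ℝ) < n := by positivity
  have hgeom (j : ℕ) (hj : j ∈ range n) :
      HasSum (fun t => (-1 : ℝ) ^ j * n.choose (j + 1) * (1 - (j + 1) / n) ^ t)
        (n * ((-1 : ℝ) ^ j * n.choose (j + 1) / (j + 1))) := by
    have hj₀ : 0 < ((j : ℝ) + 1) / n := by positivity
    have hj₁ : ((j : ℝ) + 1) / n ≤ 1 := by
      rw [div_le_one hn']; exact_mod_cast mem_range.1 hj
    have hgeom := hasSum_geometric_of_lt_one (r := 1 - (j + 1) / n) (by linarith) (by linarith)
    rw [sub_sub_cancel, inv_div] at hgeom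
    rw [mul_div_left_comm, ← mul_div_assoc, mul_div_assoc]
    exact hgeom.mul_left _
  simp only [one_sub_coverProb hn]
  rw [← sum_range_alternating_choose_succ_div_succ, mul_sum]
  exact hasSum_sum hgeom

end CoverProb

section Estimates

open Real

theorem exp_neg_two_mul_le_one_sub {x : ℝ} (hx₀ : 0 ≤ x) (hx : x ≤ 1 / 2) :
    exp (-(2 * x)) ≤ 1 - x := by
  rw [exp_neg, inv_le_comm₀ (exp_pos _) (by linarith)]
  calc (1 - x)⁻¹ ≤ 1 + 2 * x := by
        rw [inv_le_iff_one_le_mul₀ (by linarith)]; nlinarith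
    _ ≤ exp (2 * x) := by linarith [add_one_le_exp (2 * x)]

theorem one_sub_one_sub_inv_pow_pow_le_half {N C t : ℕ} (hN : 2 ≤ N) (hC : C ≠ 0)
    (ht : (t : ℝ) ≤ N * log C / 2) : (1 - (1 - 1 / N : ℝ) ^ t) ^ C ≤ 1 / 2 := by
  have hN' : (2 : ℝ) ≤ N := by exact_mod_cast hN
  have hC' : (1 : ℝ) ≤ C := by exact_mod_cast Nat.one_le_iff_ne_zero.2 hC
  have hr : exp (-(2 * (1 / N))) ≤ 1 - 1 / N :=
    exp_neg_two_mul_le_one_sub (by positivity) (by rw [div_le_div_iff₀] <;> linarith)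
  have hinv : 1 / (C : ℝ) ≤ (1 - 1 / N) ^ t := by
    calc 1 / (C : ℝ) = exp (-log C) := by rw [exp_neg, exp_log (by linarith), one_div]
      _ ≤ exp (-(2 * (1 / N))) ^ t := by
        rw [← exp_nat_mul, exp_le_exp, mul_neg, neg_le_neg_iff, ← mul_assoc, mul_one_div,
          div_le_iff₀ (by positivity)]
        linarith
      _ ≤ (1 - 1 / N) ^ t := pow_le_pow_left₀ (exp_pos _).le hr t
  have hpow_le_one : (1 - 1 / N : ℝ) ^ t ≤ 1 := by
    have : 0 < 1 / (N : ℝ) := by positivity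
    have : 1 / (N : ℝ) ≤ 1 := by rw [div_le_one] <;> linarith
    exact pow_le_one₀ (by linarith) (by linarith)
  calc (1 - (1 - 1 / N : ℝ) ^ t) ^ C ≤ (1 - 1 / C) ^ C :=
        pow_le_pow_left₀ (by linarith) (by linarith) C
    _ ≤ exp (-1) := one_sub_div_pow_le_exp_neg hC'
    _ ≤ 1 / 2 := by
        rw [exp_neg, one_div, inv_le_inv₀ (exp_pos 1) two_pos]
        linarith [add_one_le_exp (1 : ℝ)]

end Estimates

section Prefix

variable {β : Type*} [MeasurableSpace β] [MeasurableSingletonClass β] {μ : Measure (ℕ → β)}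
  {p : ℝ≥0∞}

theorem measure_prefix_eq (hind : iIndepFun (fun t (ω : ℕ → β) => ω t) μ)
    (hp : ∀ t b, μ {ω | ω t = b} = p) {t : ℕ} (g : Fin t → β) :
    μ {ω | (fun s : Fin t => ω s) = g} = p ^ t := by
  have hset : {ω : ℕ → β | (fun s : Fin t => ω s) = g} = ⋂ s ∈ (univ : Finset (Fin t)),
      (fun ω : ℕ → β => ω s) ⁻¹' {g s} := by
    ext ω; simp [funext_iff]
  rw [hset, (hind.precomp Fin.val_injective).measure_inter_preimage_eq_mul _
    fun s _ => measurableSet_singleton _]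
  simp [Set.preimage, hp]

theorem measure_prefix_mem (hind : iIndepFun (fun t (ω : ℕ → β) => ω t) μ)
    (hp : ∀ t b, μ {ω | ω t = b} = p) {t : ℕ} (S : Finset (Fin t → β)) :
    μ {ω | (fun s : Fin t => ω s) ∈ S} = #S * p ^ t := by
  have hset : {ω : ℕ → β | (fun s : Fin t => ω s) ∈ S} =
      ⋃ g ∈ S, {ω | (fun s : Fin t => ω s) = g} := by
    ext ω; simp
  have hmeas (g : Fin t → β) : MeasurableSet {ω : ℕ → β | (fun s : Fin t => ω s) = g} :=
    (measurableSet_singleton g).preimage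
      (by fun_prop : Measurable fun (ω : ℕ → β) (s : Fin t) => ω s)
  rw [hset, measure_biUnion_finset (fun g _ g' _ hne => Set.disjoint_left.2 fun ω h h' =>
    hne (h.symm.trans h')) fun g _ => hmeas g]
  simp [measure_prefix_eq hind hp]

end Prefix

theorem lintegral_natCast_eq_tsum_measure_lt {Ω : Type*} [MeasurableSpace Ω] (μ : Measure Ω)
    {T : Ω → ℕ} (hT : ∀ t, MeasurableSet {ω | t < T ω}) :
    ∫⁻ ω, (T ω : ℝ≥0∞) ∂μ = ∑' t, μ {ω | t < T ω} := by
  have hT' (ω : Ω) : (T ω : ℝ≥0∞) = ∑' t, {ω | t < T ω}.indicator (fun _ => 1) ω := by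
    rw [tsum_eq_sum (s := range (T ω)) fun t ht => by simpa using ht]
    simp [Set.indicator_apply, filter_true_of_mem fun t => mem_range.1]
  simp_rw [hT']
  rw [lintegral_tsum fun t => (measurable_const.indicator (hT t)).aemeasurable]
  simp [lintegral_indicator (hT _)]

section Cover

def coveredBy (N C t : ℕ) : Set (ℕ → Fin C → Fin N) := {ω | ∀ c x, ∃ s < t, ω s c = x}

variable {N C : ℕ} {μ : Measure (ℕ → Fin C → Fin N)}

theorem coveredBy_mono : Monotone (coveredBy N C) := fun _ _ htu _ hω c x =>
  (hω c x).imp fun _ ⟨hs, h⟩ => ⟨hs.trans_le htu, h⟩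

theorem coveredBy_eq_prefix_mem (t : ℕ) :
    coveredBy N C t = {ω | (fun s : Fin t => ω s) ∈
      ({g : Fin t → Fin C → Fin N | ∀ c, Surjective fun s => g s c} : Finset _)} := by
  ext ω
  simp [coveredBy, Surjective, Fin.exists_iff]

theorem measurableSet_coveredBy (t : ℕ) : MeasurableSet (coveredBy N C t) := by
  rw [coveredBy_eq_prefix_mem]
  exact (Finset.measurableSet _).preimage (by fun_prop)

theorem measure_coveredBy (hμ : IsCouponMeasure μ) (hN : N ≠ 0) (t : ℕ) :
    μ (coveredBy N C t) = ENNReal.ofReal (coverProb N t ^ C) := by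
  have hcard : #({g : Fin t → Fin C → Fin N | ∀ c, Surjective fun s => g s c} : Finset _) =
      #({h : Fin t → Fin N | Surjective h} : Finset _) ^ C := by
    convert card_filter_forall_apply_swap (γ := Fin C) (fun h : Fin t → Fin N => Surjective h)
    simp
  rw [coveredBy_eq_prefix_mem, measure_prefix_mem hμ.2.1 hμ.2.2, hcard, coverProb,
    ENNReal.ofReal_pow (by positivity), ENNReal.ofReal_div_of_pos (by positivity),
    ENNReal.ofReal_natCast, ENNReal.ofReal_pow (by positivity), ENNReal.ofReal_natCast,
    Nat.cast_pow, div_eq_mul_inv, mul_pow, ← ENNReal.inv_pow, ← ENNReal.inv_pow, ← pow_mul,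
    ← pow_mul, mul_comm C t]

theorem lt_coverTime_iff {ω : ℕ → Fin C → Fin N} {t : ℕ} :
    t < coverTime ω ↔ ω ∉ coveredBy N C t ∧ ∃ u, ω ∈ coveredBy N C u := by
  change t < sInf {u | ω ∈ coveredBy N C u} ↔ _
  constructor
  · intro h
    obtain ⟨u, hu⟩ := Nat.nonempty_of_pos_sInf (t.zero_le.trans_lt h)
    exact ⟨Nat.notMem_of_lt_sInf h, u, hu⟩
  · rintro ⟨ht, u, hu⟩
    by_contra! hle
    exact ht (coveredBy_mono hle (Nat.sInf_mem (s := {u | ω ∈ coveredBy N C u}) ⟨u, hu⟩))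

-- The union is needed because `coverTime ω = sInf ∅ = 0` when `ω` is never covered.
theorem setOf_lt_coverTime (t : ℕ) :
    {ω | t < coverTime ω} = (coveredBy N C t)ᶜ ∩ ⋃ u, coveredBy N C u := by
  ext ω
  simp [lt_coverTime_iff]

theorem measure_coveredBy_compl (hμ : IsCouponMeasure μ) (hN : N ≠ 0) (t : ℕ) :
    μ (coveredBy N C t)ᶜ = ENNReal.ofReal (1 - coverProb N t ^ C) := by
  have := hμ.1
  rw [prob_compl_eq_one_sub (measurableSet_coveredBy t), measure_coveredBy hμ hN,
    ENNReal.ofReal_sub _ (pow_nonneg (coverProb_nonneg N t) C), ENNReal.ofReal_one]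

theorem measure_iUnion_coveredBy_compl (hμ : IsCouponMeasure μ) (hN : N ≠ 0) :
    μ (⋃ u, coveredBy N C u)ᶜ = 0 := by
  have hlim : Filter.Tendsto (fun u => ENNReal.ofReal (1 - coverProb N u ^ C)) Filter.atTop
      (nhds 0) := by
    have hprob : Filter.Tendsto (coverProb N) Filter.atTop (nhds 1) := by
      simpa using (hasSum_one_sub_coverProb hN).summable.tendsto_atTop_zero.const_sub 1
    simpa using ENNReal.tendsto_ofReal ((hprob.pow C).const_sub 1)
  refine le_antisymm (ge_of_tendsto' hlim fun u => ?_) zero_le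
  rw [← measure_coveredBy_compl hμ hN]
  exact measure_mono (Set.compl_subset_compl.2 (Set.subset_iUnion _ u))

theorem measure_lt_coverTime (hμ : IsCouponMeasure μ) (hN : N ≠ 0) (t : ℕ) :
    μ {ω | t < coverTime ω} = ENNReal.ofReal (1 - coverProb N t ^ C) := by
  rw [setOf_lt_coverTime, measure_inter_conull (measure_iUnion_coveredBy_compl hμ hN),
    measure_coveredBy_compl hμ hN]

theorem lintegral_coverTime (hμ : IsCouponMeasure μ) (hN : N ≠ 0) :
    ∫⁻ ω, (coverTime ω : ℝ≥0∞) ∂μ =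
      ∑' t, ENNReal.ofReal (1 - coverProb N t ^ C) := by
  rw [lintegral_natCast_eq_tsum_measure_lt μ fun t => ?_]
  · exact tsum_congr (measure_lt_coverTime hμ hN)
  · rw [setOf_lt_coverTime]
    exact (measurableSet_coveredBy t).compl.inter (.iUnion measurableSet_coveredBy)

end Cover

section TailSum

variable {N C : ℕ}

theorem ofReal_mul_harmonicR_le_tsum (hN : N ≠ 0) (hC : C ≠ 0) :
    ENNReal.ofReal (N * harmonicR N) ≤ ∑' t, ENNReal.ofReal (1 - coverProb N t ^ C) := by
  have hsum := hasSum_one_sub_coverProb hN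
  rw [← hsum.tsum_eq,
    ENNReal.ofReal_tsum_of_nonneg (fun t => sub_nonneg.2 (coverProb_le_one hN t)) hsum.summable]
  refine ENNReal.tsum_le_tsum fun t => ENNReal.ofReal_le_ofReal (sub_le_sub_left ?_ 1)
  exact pow_le_of_le_one (coverProb_nonneg N t) (coverProb_le_one hN t) hC

theorem ofReal_log_div_six_le_tsum (hN : 2 ≤ N) (hlog : 3 / 2 ≤ Real.log C) :
    ENNReal.ofReal (Real.log C / 6) ≤ ∑' t, ENNReal.ofReal (1 - coverProb N t ^ C) := by
  have hC : C ≠ 0 := by rintro rfl; norm_num at hlog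
  have hN' : (2 : ℝ) ≤ N := by exact_mod_cast hN
  set t₀ := ⌊(N : ℝ) * Real.log C / 2⌋₊
  have hhalf (t : ℕ) (ht : t ∈ range t₀) :
      ENNReal.ofReal (1 / 2) ≤ ENNReal.ofReal (1 - coverProb N t ^ C) := by
    refine ENNReal.ofReal_le_ofReal ?_
    have ht' : (t : ℝ) ≤ N * Real.log C / 2 :=
      (Nat.cast_le.2 (mem_range.1 ht).le).trans (Nat.floor_le (by positivity))
    have := (pow_le_pow_left₀ (coverProb_nonneg N t) (coverProb_le_one_sub_pow (by omega) t)
      C).trans (one_sub_one_sub_inv_pow_pow_le_half hN hC ht')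
    linarith
  have ht₀ : Real.log C / 6 ≤ t₀ * (1 / 2) := by
    have := Nat.sub_one_lt_floor ((N : ℝ) * Real.log C / 2)
    nlinarith
  calc ENNReal.ofReal (Real.log C / 6) ≤ ENNReal.ofReal (t₀ * (1 / 2)) :=
        ENNReal.ofReal_le_ofReal ht₀
    _ = ∑ t ∈ range t₀, ENNReal.ofReal (1 / 2) := by
        rw [ENNReal.ofReal_mul (by positivity), ENNReal.ofReal_natCast, sum_const, card_range,
          nsmul_eq_mul]
    _ ≤ ∑ t ∈ range t₀, ENNReal.ofReal (1 - coverProb N t ^ C) := sum_le_sum hhalf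
    _ ≤ ∑' t, ENNReal.ofReal (1 - coverProb N t ^ C) := ENNReal.sum_le_tsum _

end TailSum

end CouponCollector

open CouponCollector

/-- In the parallel coupon collector problem with `N ≥ 2`
coupon types and `C ≥ 1` collectors, the cover time satisfies
`E[T(N, C)] ≥ max (N * H_N) (log C / 6)`. -/
theorem coupon_cover_time_lower_bound
    (N C : ℕ) (hN : 2 ≤ N) (hC : 1 ≤ C)
    (μ : Measure (ℕ → Fin C → Fin N)) (hμ : IsCouponMeasure μ) :
    ENNReal.ofReal (max ((N : ℝ) * harmonicR N) (Real.log C / 6)) ≤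
      ∫⁻ ω, (coverTime ω : ℝ≥0∞) ∂μ := by
  have hN₀ : N ≠ 0 := by omega
  have hharm := ofReal_mul_harmonicR_le_tsum hN₀ (C := C) (by omega)
  rw [lintegral_coverTime hμ hN₀, ENNReal.ofReal_max]
  refine max_le hharm ?_
  by_cases hlog : 3 / 2 ≤ Real.log C
  · exact ofReal_log_div_six_le_tsum hN hlog
  · have : 1 ≤ (N : ℝ) * harmonicR N :=
      one_le_mul_of_one_le_of_one_le (by exact_mod_cast hN₀.bot_lt) (one_le_harmonicR hN₀)
    exact (ENNReal.ofReal_le_ofReal (by linarith)).trans hharm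
end

section
/- In the parallel coupon collector problem with N ≥ 2 coupon types and C ≥ 1 collectors, the cover time satisfies E[T(N, C)] ≥ log(C)/6. -/
/-
Let `t = ⌊log₂ C⌋`. The first `t` rounds are uniform on `Fin t → Fin C → Fin N`, so all `C`
collectors have drawn a fixed coupon `x` within them with probability
`(1 - (1 - 1/N)^t)^C ≤ exp (-C (1 - 1/N)^t) ≤ exp (-C 2^{-t}) ≤ exp (-1) < 1/2`.
Hence with probability at least `1/2` some collector still misses `x` after `t` rounds, and
then `T ≥ t`; by the second Borel–Cantelli lemma every collector almost surely draws every
coupon eventually, so the junk value `sInf ∅ = 0` of `coverTime` does not interfere.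
Therefore `E[T] ≥ t/2 ≥ log C / 6`.
-/

open MeasureTheory ProbabilityTheory
open scoped ENNReal

theorem two_mul_one_sub_pow_le_one {u : ℝ} {C : ℕ} (hu : u ≤ 1) (hC : 1 ≤ C * u) :
    2 * (1 - u) ^ C ≤ 1 := by
  have hexp : (1 - u) ^ C ≤ Real.exp (-1) := calc
    (1 - u) ^ C ≤ Real.exp (-u) ^ C :=
      pow_le_pow_left₀ (by linarith) (Real.one_sub_le_exp_neg u) C
    _ = Real.exp (-(C * u)) := by rw [← Real.exp_nat_mul]; ring_nf
    _ ≤ Real.exp (-1) := Real.exp_le_exp.2 (by linarith)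
  linarith [Real.exp_neg_one_lt_half]

theorem Nat.two_mul_sub_pow_le {a b C : ℕ} (hb : 0 < b) (hba : b ≤ a) (hC : a ≤ C * b) :
    2 * (a - b) ^ C ≤ a ^ C := by
  have ha : (0 : ℝ) < a := by exact_mod_cast hb.trans_le hba
  have key := two_mul_one_sub_pow_le_one (u := (b : ℝ) / a) (C := C)
    ((div_le_one ha).2 (by exact_mod_cast hba))
    (by rw [mul_div_assoc', le_div_iff₀ ha, one_mul]; exact_mod_cast hC)
  rw [one_sub_div ha.ne', div_pow, mul_div_assoc', div_le_one (by positivity),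
    ← Nat.cast_sub hba] at key
  exact_mod_cast key

theorem ENNReal.natCast_div_le_inv_two {a b : ℕ} (h : 2 * a ≤ b) : (a : ℝ≥0∞) / b ≤ 2⁻¹ := by
  rw [ENNReal.div_le_iff_le_mul (by simp) (by simp), ← ENNReal.div_eq_inv_mul,
    ENNReal.le_div_iff_mul_le (by simp) (by simp), mul_comm]
  exact_mod_cast h

theorem Real.log_natCast_le_three_mul_natLog (C : ℕ) : Real.log C ≤ 3 * Nat.log 2 C := by
  rcases Nat.lt_or_ge C 2 with hC | hC
  · interval_cases C <;> simp
  have ht : (1 : ℝ) ≤ Nat.log 2 C := by exact_mod_cast Nat.log_pos one_lt_two hC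
  have hlt : (C : ℝ) < 2 ^ (Nat.log 2 C + 1) := by
    exact_mod_cast Nat.lt_pow_succ_log_self one_lt_two C
  calc Real.log C ≤ Real.log (2 ^ (Nat.log 2 C + 1)) := Real.log_le_log (by positivity) hlt.le
    _ = (Nat.log 2 C + 1) * Real.log 2 := by rw [Real.log_pow]; push_cast; ring
    _ ≤ 3 * Nat.log 2 C := by nlinarith [Real.log_two_lt_d9]

theorem Fintype.card_subtype_exists_eq (t : ℕ) {N : ℕ} (x : Fin N) :
    Fintype.card {h : Fin t → Fin N // ∃ s, h s = x} = N ^ t - (N - 1) ^ t := by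
  have hmiss : Fintype.card {h : Fin t → Fin N // ¬ ∃ s, h s = x} = (N - 1) ^ t := by
    simp only [not_exists]
    rw [Fintype.card_congr (Equiv.subtypePiEquivPi (p := fun _ y => ¬ y = x))]
    simp
  have hle := Fintype.card_subtype_le fun h : Fin t → Fin N => ∃ s, h s = x
  rw [← hmiss, Fintype.card_subtype_compl]
  simp only [Fintype.card_pi, Fintype.card_fin, Finset.prod_const, Finset.card_univ] at hle ⊢
  omega

theorem Fintype.card_subtype_forall_exists_eq (t C : ℕ) {N : ℕ} (x : Fin N) :
    Fintype.card {g : Fin t → Fin C → Fin N // ∀ c, ∃ s, g s c = x}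
      = (N ^ t - (N - 1) ^ t) ^ C := by
  let e : {g : Fin t → Fin C → Fin N // ∀ c, ∃ s, g s c = x} ≃
      (Fin C → {h : Fin t → Fin N // ∃ s, h s = x}) :=
    ((Equiv.piComm fun (_ : Fin t) (_ : Fin C) => Fin N).subtypeEquiv
      (q := fun h => ∀ c, ∃ s, h c s = x) fun _ => Iff.rfl).trans
      (Equiv.subtypePiEquivPi (p := fun _ (h : Fin t → Fin N) => ∃ s, h s = x))
  rw [Fintype.card_congr e, Fintype.card_fun, Fintype.card_fin, Fintype.card_subtype_exists_eq]

theorem exists_lt_coverTime {N C : ℕ} {ω : ℕ → Fin C → Fin N} (h : ∀ c x, ∃ s, ω s c = x) :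
    ∀ c x, ∃ s < coverTime ω, ω s c = x := by
  have hev : ∀ᶠ t in Filter.atTop, ∀ c x, ∃ s < t, ω s c = x :=
    Filter.eventually_all.2 fun c => Filter.eventually_all.2 fun x =>
      let ⟨s, hs⟩ := h c x
      (Filter.eventually_gt_atTop s).mono fun _ ht => ⟨s, ht, hs⟩
  exact Nat.sInf_mem hev.exists

theorem le_coverTime {N C t : ℕ} {ω : ℕ → Fin C → Fin N} {x : Fin N}
    (h : ∀ c x, ∃ s, ω s c = x) (hx : ¬ ∀ c, ∃ s < t, ω s c = x) : t ≤ coverTime ω := by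
  by_contra! hlt
  exact hx fun c =>
    let ⟨s, hs, hsx⟩ := exists_lt_coverTime h c x
    ⟨s, hs.trans hlt, hsx⟩

theorem measurableSet_forall_exists_pick {N C : ℕ} (t : ℕ) (x : Fin N) :
    MeasurableSet {ω : ℕ → Fin C → Fin N | ∀ c, ∃ s < t, ω s c = x} := by
  measurability

namespace IsCouponMeasure

variable {N C : ℕ} {μ : Measure (ℕ → Fin C → Fin N)}

theorem map_initialRounds_eq_uniformOfFintype [NeZero N] (hμ : IsCouponMeasure μ) (t : ℕ) :
    μ.map (fun ω (s : Fin t) => ω s) =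
      (PMF.uniformOfFintype (Fin t → Fin C → Fin N)).toMeasure := by
  refine Measure.ext_iff_singleton.2 fun g => ?_
  have hpre : (fun (ω : ℕ → Fin C → Fin N) (s : Fin t) => ω s) ⁻¹' {g} =
      ⋂ s : Fin t, {ω | ω s = g s} := by
    ext ω; simp [funext_iff]
  rw [Measure.map_apply (measurable_pi_lambda _ fun s => measurable_pi_apply _)
    (measurableSet_singleton g), hpre,
    (hμ.2.1.precomp Fin.val_injective).meas_iInter (s := fun s : Fin t => {ω | ω s = g s})
      fun s => ⟨{g s}, measurableSet_singleton _, rfl⟩,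
    PMF.toMeasure_apply_singleton _ _ (measurableSet_singleton g), PMF.uniformOfFintype_apply]
  simp [hμ.2.2, ENNReal.inv_pow]

theorem measure_forall_exists_pick_le_half (hμ : IsCouponMeasure μ) {t : ℕ} (hN : 2 ≤ N)
    (ht : 2 ^ t ≤ C) (x : Fin N) : μ {ω | ∀ c, ∃ s < t, ω s c = x} ≤ 2⁻¹ := by
  have : NeZero N := ⟨by omega⟩
  have hE : {ω : ℕ → Fin C → Fin N | ∀ c, ∃ s < t, ω s c = x} =
      (fun ω (s : Fin t) => ω s) ⁻¹' {g | ∀ c, ∃ s, g s c = x} := by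
    ext ω; simp [Fin.exists_iff]
  rw [hE, ← Measure.map_apply (measurable_pi_lambda _ fun s => measurable_pi_apply _)
    (Set.toFinite _).measurableSet, hμ.map_initialRounds_eq_uniformOfFintype,
    PMF.toMeasure_uniformOfFintype_apply _ (Set.toFinite _).measurableSet]
  have hcard : Fintype.card {g : Fin t → Fin C → Fin N | ∀ c, ∃ s, g s c = x} =
      (N ^ t - (N - 1) ^ t) ^ C := by
    convert Fintype.card_subtype_forall_exists_eq t C x using 2; rfl
  have htotal : Fintype.card (Fin t → Fin C → Fin N) = (N ^ t) ^ C := by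
    simp [← pow_mul, mul_comm]
  have hcover : N ^ t ≤ C * (N - 1) ^ t := calc
    N ^ t ≤ (2 * (N - 1)) ^ t := Nat.pow_le_pow_left (by omega) t
    _ = 2 ^ t * (N - 1) ^ t := mul_pow ..
    _ ≤ C * (N - 1) ^ t := Nat.mul_le_mul_right _ ht
  rw [hcard, htotal]
  exact ENNReal.natCast_div_le_inv_two <| Nat.two_mul_sub_pow_le
    (Nat.pow_pos (by omega)) (Nat.pow_le_pow_left (by omega) t) hcover

theorem ae_exists_pick_eq (hμ : IsCouponMeasure μ) : ∀ᵐ ω ∂μ, ∀ c x, ∃ s, ω s c = x := by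
  have := hμ.1
  refine ae_all_iff.2 fun c => ae_all_iff.2 fun x => ?_
  let A : ℕ → Set (ℕ → Fin C → Fin N) := fun s => {ω | ω s c = x}
  have hA : ∀ s, MeasurableSet (A s) := fun s =>
    (measurableSet_singleton x).preimage (by fun_prop)
  have hindep : iIndepSet A μ := (iIndepSet_iff_meas_biInter hA).2 fun S =>
    hμ.2.1.meas_biInter fun s _ =>
      ⟨{f | f c = x}, (measurableSet_singleton x).preimage (by fun_prop), rfl⟩
  have hlarge : ∀ s, ((N : ℝ≥0∞) ^ C)⁻¹ ≤ μ (A s) := fun s =>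
    (hμ.2.2 s fun _ => x).symm.le.trans (measure_mono fun ω (h : ω s = _) => congrFun h c)
  have hsum : ∑' s, μ (A s) = ∞ := top_unique <|
    (ENNReal.tsum_const_eq_top_of_ne_zero (by simp)).symm.le.trans (ENNReal.tsum_le_tsum hlarge)
  have hlimsup := (mem_ae_iff_prob_eq_one (MeasurableSet.measurableSet_limsup hA)).2
    (measure_limsup_eq_one hA hindep hsum)
  filter_upwards [hlimsup] with ω hω
  exact (Filter.mem_limsup_iff_frequently_mem.1 hω).exists

theorem mul_measure_compl_le_lintegral_coverTime (hμ : IsCouponMeasure μ) (t : ℕ) (x : Fin N) :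
    t * μ {ω | ∀ c, ∃ s < t, ω s c = x}ᶜ ≤ ∫⁻ ω, (coverTime ω : ℝ≥0∞) ∂μ := by
  rw [← lintegral_indicator_const (measurableSet_forall_exists_pick t x).compl]
  refine lintegral_mono_ae ?_
  filter_upwards [hμ.ae_exists_pick_eq] with ω hω
  by_cases hE : ω ∈ {ω | ∀ c, ∃ s < t, ω s c = x}ᶜ
  · rw [Set.indicator_of_mem hE]
    exact_mod_cast le_coverTime hω hE
  · simp [hE]

end IsCouponMeasure

/-- In the parallel coupon collector problem with `N ≥ 2`
coupon types and `C ≥ 1` collectors, the cover time satisfies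
`E[T(N, C)] ≥ log C / 6`. -/
theorem coupon_cover_time_log_lower_bound
    (N C : ℕ) (hN : 2 ≤ N) (hC : 1 ≤ C)
    (μ : Measure (ℕ → Fin C → Fin N)) (hμ : IsCouponMeasure μ) :
    ENNReal.ofReal (Real.log C / 6) ≤ ∫⁻ ω, (coverTime ω : ℝ≥0∞) ∂μ := by
  have := hμ.1
  set t := Nat.log 2 C
  let x : Fin N := ⟨0, by omega⟩
  have hmeas := measurableSet_forall_exists_pick (C := C) t x
  have hE := hμ.measure_forall_exists_pick_le_half hN (Nat.pow_log_le_self 2 (by omega)) x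
  calc ENNReal.ofReal (Real.log C / 6) ≤ t * 2⁻¹ := by
        rw [ENNReal.ofReal_le_iff_le_toReal (by finiteness)]
        simp only [ENNReal.toReal_mul, ENNReal.toReal_natCast, ENNReal.toReal_inv,
          ENNReal.toReal_ofNat]
        linarith [Real.log_natCast_le_three_mul_natLog C]
    _ ≤ t * μ {ω | ∀ c, ∃ s < t, ω s c = x}ᶜ := by
        gcongr
        rw [prob_compl_eq_one_sub hmeas, ← ENNReal.one_sub_inv_two]
        exact tsub_le_tsub_left hE 1
    _ ≤ ∫⁻ ω, (coverTime ω : ℝ≥0∞) ∂μ := hμ.mul_measure_compl_le_lintegral_coverTime t x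
end
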